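/- Let G be a graph with no isolated vertices having an end-vertex w whose unique neighbour x has two other neighbours u, v that are nonadjacent in G. Then γ_tR(G+uv) = γ_tR(G), and hence G is not γ_tR-edge-critical. -/
import Mathlib

/-- A total Roman dominating function: values in {0,1,2}, every vertex with value 0
has a neighbour with value 2, and vertices with positive value are not isolated in
the induced subgraph of positive-value vertices. -/
def TRDF {V : Type*} (G : SimpleGraph V) (f : V → ℕ) : Prop :=
  (∀ v, f v ≤ 2) ∧
  (∀ v, f v = 0 → ∃ u, G.Adj v u ∧ f u = 2) ∧
  (∀ v, 0 < f v → ∃ u, G.Adj v u ∧ 0 < f u)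

/-- The total Roman domination number. -/
noncomputable def trdn {V : Type*} [Fintype V] (G : SimpleGraph V) : ℕ :=
  sInf {w | ∃ f : V → ℕ, TRDF G f ∧ w = ∑ v, f v}

/-- The graph `G + uv`. -/
def addEdge {V : Type*} (G : SimpleGraph V) (u v : V) : SimpleGraph V :=
  G ⊔ SimpleGraph.fromEdgeSet {s(u, v)}

/-- `G` has no isolated vertices. -/
def NoIsolated {V : Type*} (G : SimpleGraph V) : Prop := ∀ v, ∃ u, G.Adj v u

lemma addEdge_adj {V : Type*} (G : SimpleGraph V) {u v : V} (hne : u ≠ v) (a b : V) :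
    (addEdge G u v).Adj a b ↔ G.Adj a b ∨ (a = u ∧ b = v) ∨ (a = v ∧ b = u) := by
  simp only [addEdge, SimpleGraph.sup_adj, SimpleGraph.fromEdgeSet_adj,
    Set.mem_singleton_iff, Sym2.eq_iff]
  constructor
  · rintro (h | ⟨(⟨rfl, rfl⟩ | ⟨rfl, rfl⟩), _⟩) <;> tauto
  · rintro (h | ⟨rfl, rfl⟩ | ⟨rfl, rfl⟩) <;> tauto

lemma trdf_mono {V : Type*} (G : SimpleGraph V) (u v : V) (f : V → ℕ)
    (hf : TRDF G f) : TRDF (addEdge G u v) f := by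
  obtain ⟨h1, h2, h3⟩ := hf
  refine ⟨h1, fun z hz => ?_, fun z hz => ?_⟩
  · obtain ⟨y, hy, hy2⟩ := h2 z hz
    exact ⟨y, by simp [addEdge, hy], hy2⟩
  · obtain ⟨y, hy, hy2⟩ := h3 z hz
    exact ⟨y, by simp [addEdge, hy], hy2⟩

lemma trdf_one {V : Type*} (G : SimpleGraph V) (h : NoIsolated G) :
    TRDF G (fun _ => 1) := by
  refine ⟨fun _ => one_le_two, fun z hz => absurd hz one_ne_zero, fun z _ => ?_⟩
  obtain ⟨y, hy⟩ := h z
  exact ⟨y, hy, one_pos⟩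

lemma transform {V : Type*} [Fintype V] (G : SimpleGraph V)
    {w x u v : V} (hwx : G.Adj w x) (hnbr : ∀ y, G.Adj w y → y = x)
    (hu : G.Adj x u) (hv : G.Adj x v) (huw : u ≠ w) (hvw : v ≠ w)
    (hne : u ≠ v) (f : V → ℕ) (hf : TRDF (addEdge G u v) f) :
    ∃ g, TRDF G g ∧ ∑ z, g z = ∑ z, f z := by
  classical
  obtain ⟨hle, h0, hpos⟩ := hf
  have hwu : w ≠ u := huw.symm
  have hwv : w ≠ v := hvw.symm
  have hadjw : ∀ y, (addEdge G u v).Adj w y → y = x := by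
    intro y hy
    rw [addEdge_adj G hne] at hy
    rcases hy with h | ⟨h1, _⟩ | ⟨h1, _⟩
    · exact hnbr y h
    · exact absurd h1 hwu
    · exact absurd h1 hwv
  have hkey : f x = 2 ∨ (0 < f x ∧ 0 < f w) := by
    by_cases h : f w = 0
    · obtain ⟨y, hy, hy2⟩ := h0 w h
      rw [hadjw y hy] at hy2
      exact Or.inl hy2
    · obtain ⟨y, hy, hy2⟩ := hpos w (Nat.pos_of_ne_zero h)
      rw [hadjw y hy] at hy2
      exact Or.inr ⟨hy2, Nat.pos_of_ne_zero h⟩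
  have hfxpos : 0 < f x := by rcases hkey with h | h; omega; exact h.1
  have trans : (f u = 0 → ∃ y, G.Adj u y ∧ f y = 2) →
      (f v = 0 → ∃ y, G.Adj v y ∧ f y = 2) → TRDF G f := by
    refine fun hu0 hv0 => ⟨hle, ?_, ?_⟩
    · intro z hz
      rcases eq_or_ne z u with rfl | hzu
      · exact hu0 hz
      rcases eq_or_ne z v with rfl | hzv
      · exact hv0 hz
      obtain ⟨y, hy, hy2⟩ := h0 z hz
      rw [addEdge_adj G hne] at hy
      rcases hy with h | ⟨rfl, rfl⟩ | ⟨rfl, rfl⟩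
      · exact ⟨y, h, hy2⟩
      · exact absurd rfl hzu
      · exact absurd rfl hzv
    · intro z hz
      obtain ⟨y, hy, hyp⟩ := hpos z hz
      rw [addEdge_adj G hne] at hy
      rcases hy with h | ⟨rfl, rfl⟩ | ⟨rfl, rfl⟩
      · exact ⟨y, h, hyp⟩
      · exact ⟨x, hu.symm, hfxpos⟩
      · exact ⟨x, hv.symm, hfxpos⟩
  by_cases hgood : (f u = 0 → ∃ y, G.Adj u y ∧ f y = 2) ∧
      (f v = 0 → ∃ y, G.Adj v y ∧ f y = 2)
  · exact ⟨f, trans hgood.1 hgood.2, rfl⟩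
  have hfx2 : f x ≠ 2 := fun h2 =>
    hgood ⟨fun _ => ⟨x, hu.symm, h2⟩, fun _ => ⟨x, hv.symm, h2⟩⟩
  have hfwpos : 0 < f w := by rcases hkey with h | h; exact absurd h hfx2; exact h.2
  have hfx1 : f x = 1 := by have := hle x; omega
  -- extract witness c
  obtain ⟨c, hxc, hc2, hcw⟩ : ∃ c, G.Adj x c ∧ f c = 2 ∧ c ≠ w := by
    rw [not_and_or] at hgood
    rcases hgood with hg | hg
    · push_neg at hg
      obtain ⟨hu0, hnw⟩ := hg
      obtain ⟨y, hy, hy2⟩ := h0 u hu0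
      rw [addEdge_adj G hne] at hy
      rcases hy with h | ⟨_, h2⟩ | ⟨h1, _⟩
      · exact absurd hy2 (hnw y h)
      · exact ⟨v, hv, h2 ▸ hy2, hvw⟩
      · exact absurd h1 hne
    · push_neg at hg
      obtain ⟨hv0, hnw⟩ := hg
      obtain ⟨y, hy, hy2⟩ := h0 v hv0
      rw [addEdge_adj G hne] at hy
      rcases hy with h | ⟨h1, _⟩ | ⟨_, h2⟩
      · exact absurd hy2 (hnw y h)
      · exact absurd h1 hne.symm
      · exact ⟨u, hu, h2 ▸ hy2, huw⟩
  have hwxne : w ≠ x := hwx.ne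
  have hcx : c ≠ x := hxc.ne'
  set g : V → ℕ := fun z => if z = x then 2 else if z = w then f w - 1 else f z with hg
  have hgx : g x = 2 := by simp [hg]
  have hgw : g w = f w - 1 := by simp [hg, hwxne]
  have hgo : ∀ z, z ≠ x → z ≠ w → g z = f z := by
    intro z h1 h2; simp [hg, h1, h2]
  have hgc : g c = 2 := by rw [hgo c hcx hcw, hc2]
  refine ⟨g, ⟨?_, ?_, ?_⟩, ?_⟩
  · intro z
    have := hle z; have := hle w
    simp only [hg]; split_ifs <;> omega
  · intro z hz
    rcases eq_or_ne z x with rfl | hzx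
    · rw [hgx] at hz; omega
    rcases eq_or_ne z w with rfl | hzw
    · exact ⟨x, hwx, hgx⟩
    have hfz : f z = 0 := by rwa [hgo z hzx hzw] at hz
    rcases eq_or_ne z u with rfl | hzu
    · exact ⟨x, hu.symm, hgx⟩
    rcases eq_or_ne z v with rfl | hzv
    · exact ⟨x, hv.symm, hgx⟩
    obtain ⟨y, hy, hy2⟩ := h0 z hfz
    rw [addEdge_adj G hne] at hy
    rcases hy with h | ⟨rfl, rfl⟩ | ⟨rfl, rfl⟩
    · refine ⟨y, h, ?_⟩
      have hyw : y ≠ w := fun hyw => hzx (hnbr z ((hyw ▸ h).symm))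
      rcases eq_or_ne y x with rfl | hyx
      · exact hgx
      · rw [hgo y hyx hyw]; exact hy2
    · exact absurd rfl hzu
    · exact absurd rfl hzv
  · intro z hz
    rcases eq_or_ne z x with rfl | hzx
    · exact ⟨c, hxc, by rw [hgc]; omega⟩
    rcases eq_or_ne z w with rfl | hzw
    · exact ⟨x, hwx, by rw [hgx]; omega⟩
    have hfz : 0 < f z := by rwa [hgo z hzx hzw] at hz
    obtain ⟨y, hy, hyp⟩ := hpos z hfz
    rw [addEdge_adj G hne] at hy
    rcases hy with h | ⟨rfl, rfl⟩ | ⟨rfl, rfl⟩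
    · refine ⟨y, h, ?_⟩
      have hyw : y ≠ w := fun hyw => hzx (hnbr z ((hyw ▸ h).symm))
      rcases eq_or_ne y x with rfl | hyx
      · rw [hgx]; omega
      · rw [hgo y hyx hyw]; exact hyp
    · exact ⟨x, hu.symm, by rw [hgx]; omega⟩
    · exact ⟨x, hv.symm, by rw [hgx]; omega⟩
  · -- sum equality
    have hwmem : w ∈ Finset.univ.erase x := Finset.mem_erase.mpr ⟨hwxne, Finset.mem_univ w⟩
    rw [← Finset.sum_erase_add Finset.univ g (Finset.mem_univ x),
        ← Finset.sum_erase_add Finset.univ f (Finset.mem_univ x),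
        ← Finset.sum_erase_add _ g hwmem, ← Finset.sum_erase_add _ f hwmem]
    have hS : ∑ z ∈ (Finset.univ.erase x).erase w, g z
        = ∑ z ∈ (Finset.univ.erase x).erase w, f z := by
      refine Finset.sum_congr rfl fun z hz => ?_
      rw [Finset.mem_erase, Finset.mem_erase] at hz
      exact hgo z hz.2.1 hz.1
    rw [hS, hgx, hgw, hfx1]
    omega

theorem stmt12 {V : Type*} [Fintype V] (G : SimpleGraph V) [DecidableRel G.Adj]
    (hiso : NoIsolated G)
    (w x u v : V) (hwx : G.Adj w x) (hdw : G.degree w = 1)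
    (hu : G.Adj x u) (hv : G.Adj x v) (huw : u ≠ w) (hvw : v ≠ w)
    (huv : Gᶜ.Adj u v) :
    trdn (addEdge G u v) = trdn G ∧
    ¬ ((∃ a b, Gᶜ.Adj a b) ∧ ∀ a b, Gᶜ.Adj a b → trdn (addEdge G a b) < trdn G) := by
  have hne : u ≠ v := huv.ne
  have hnbr : ∀ y, G.Adj w y → y = x := by
    intro y hy
    have hx : x ∈ G.neighborFinset w := by rwa [SimpleGraph.mem_neighborFinset]
    have hy' : y ∈ G.neighborFinset w := by rwa [SimpleGraph.mem_neighborFinset]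
    have : (G.neighborFinset w).card = 1 := hdw
    obtain ⟨a, ha⟩ := Finset.card_eq_one.mp this
    rw [ha, Finset.mem_singleton] at hx hy'
    rw [hy', hx]
  have hSG : {n | ∃ f : V → ℕ, TRDF G f ∧ n = ∑ z, f z}.Nonempty :=
    ⟨∑ z : V, (1 : ℕ), fun _ => 1, trdf_one G hiso, rfl⟩
  have hisoA : NoIsolated (addEdge G u v) := by
    intro z
    obtain ⟨y, hy⟩ := hiso z
    exact ⟨y, by simp [addEdge, hy]⟩
  have hSA : {n | ∃ f : V → ℕ, TRDF (addEdge G u v) f ∧ n = ∑ z, f z}.Nonempty :=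
    ⟨∑ z : V, (1 : ℕ), fun _ => 1, trdf_one _ hisoA, rfl⟩
  have h1 : trdn (addEdge G u v) ≤ trdn G := by
    obtain ⟨f, hf, hsum⟩ : ∃ f : V → ℕ, TRDF G f ∧ trdn G = ∑ z, f z := Nat.sInf_mem hSG
    rw [hsum]
    exact Nat.sInf_le ⟨f, trdf_mono G u v f hf, rfl⟩
  have h2 : trdn G ≤ trdn (addEdge G u v) := by
    obtain ⟨f, hf, hsum⟩ : ∃ f : V → ℕ, TRDF (addEdge G u v) f ∧ trdn (addEdge G u v) = ∑ z, f z :=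
      Nat.sInf_mem hSA
    obtain ⟨g, hg, hgsum⟩ := transform G hwx hnbr hu hv huw hvw hne f hf
    rw [hsum]
    exact Nat.sInf_le ⟨g, hg, hgsum.symm⟩
  have heq : trdn (addEdge G u v) = trdn G := le_antisymm h1 h2
  refine ⟨heq, fun ⟨_, hall⟩ => ?_⟩
  have := hall u v huv
  omega
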